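/- arXiv:2311.15409 — 3 statements merged into one kernel-verified Lean document; each statement's English description precedes it below -/
import Mathlib

section
/- For any algebraically closed field F of characteristic 2, SL₂(F) is an ICC group: every non-identity element has an infinite conjugacy class. -/
/-! Conjugating `g = !![a, b; c, d]` by the transvection `!![1, t; 0, 1]` gives a matrix whose
`(1, 1)` entry is `c t + d` and whose `(0, 1)` entry is `(a - d) t + b` when `c = 0`; conjugating
by `!![1, 0; t, 1]` gives the `(0, 0)` entry `a + b t`. Unless `b = c = 0` and `a = d`, i.e. unless
`g` is central, one of these is a nonconstant affine function of `t`, so over an infinite field the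
conjugacy class of `g` is infinite. In characteristic 2 the only central element is `1`, because
`r ^ 2 = 1` forces `r = 1`. -/

open Matrix
open scoped MatrixGroups

namespace Matrix.SpecialLinearGroup

section CommRing

variable {R : Type*} [CommRing R]

lemma conj_transvection_zero_one_apply_one_one (g : SL(2, R)) (t : R) :
    ((transvection zero_ne_one t)⁻¹ * g * transvection zero_ne_one t : SL(2, R)) 1 1 =
      g 1 0 * t + g 1 1 := by
  rw [transvection_inv, coe_mul, coe_mul, transvection_coe, transvection_coe]
  simp [mul_apply, Fin.sum_univ_two, single_apply]

lemma conj_transvection_zero_one_apply_zero_one (g : SL(2, R)) (t : R) :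
    ((transvection zero_ne_one t)⁻¹ * g * transvection zero_ne_one t : SL(2, R)) 0 1 =
      (g 0 0 - t * g 1 0) * t + (g 0 1 - t * g 1 1) := by
  rw [transvection_inv, coe_mul, coe_mul, transvection_coe, transvection_coe]
  simp [mul_apply, Fin.sum_univ_two, single_apply, sub_eq_add_neg]

lemma conj_transvection_one_zero_apply_zero_zero (g : SL(2, R)) (t : R) :
    ((transvection one_ne_zero t)⁻¹ * g * transvection one_ne_zero t : SL(2, R)) 0 0 =
      g 0 0 + g 0 1 * t := by
  rw [transvection_inv, coe_mul, coe_mul, transvection_coe, transvection_coe]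
  simp [mul_apply, Fin.sum_univ_two, single_apply]

theorem center_eq_bot_of_charP_two [CharP R 2] [NoZeroDivisors R] :
    Subgroup.center SL(2, R) = ⊥ := by
  refine eq_bot_iff.mpr fun g hg ↦ ?_
  obtain ⟨r, hr, hrg⟩ := mem_center_iff.mp hg
  have hr_one : r = 1 := CharTwo.sq_inj.mp (by simpa using hr)
  rw [Subgroup.mem_bot]
  ext : 1
  simp [← hrg, hr_one]

end CommRing

variable {R : Type*} [CommRing R] [IsDomain R] [Infinite R]

lemma infinite_range_conj_of_affine_entry {n : Type*} [Fintype n] [DecidableEq n]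
    (g : SpecialLinearGroup n R) (c : R → SpecialLinearGroup n R) (i j : n) {α β : R}
    (hα : α ≠ 0) (h : ∀ t, ((c t)⁻¹ * g * c t : SpecialLinearGroup n R) i j = α * t + β) :
    (Set.range fun h : SpecialLinearGroup n R => h⁻¹ * g * h).Infinite := by
  have hinj : Function.Injective fun t ↦ ((c t)⁻¹ * g * c t : SpecialLinearGroup n R) i j := by
    rw [funext h]
    exact (add_left_injective β).comp (mul_right_injective₀ hα)
  exact Set.infinite_of_injective_forall_mem (f := fun t ↦ (c t)⁻¹ * g * c t)
    (.of_comp (f := fun g : SpecialLinearGroup n R ↦ g i j) hinj) fun t ↦ ⟨c t, rfl⟩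

theorem infinite_range_conj_of_notMem_center (g : SL(2, R))
    (hg : g ∉ Subgroup.center SL(2, R)) :
    (Set.range fun h : SL(2, R) => h⁻¹ * g * h).Infinite := by
  by_cases h10 : g 1 0 = 0
  swap
  · exact infinite_range_conj_of_affine_entry g _ 1 1 h10
      (conj_transvection_zero_one_apply_one_one g)
  by_cases h01 : g 0 1 = 0
  swap
  · exact infinite_range_conj_of_affine_entry g _ 0 0 h01
      fun t ↦ (conj_transvection_one_zero_apply_zero_zero g t).trans (add_comm _ _)
  by_cases hdiag : g 0 0 - g 1 1 = 0
  swap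
  · refine infinite_range_conj_of_affine_entry g (transvection zero_ne_one) 0 1 hdiag
      (β := g 0 1) fun t ↦ ?_
    rw [conj_transvection_zero_one_apply_zero_one, h10]
    ring
  have hd : g 1 1 = g 0 0 := (sub_eq_zero.mp hdiag).symm
  refine absurd (mem_center_iff.mpr ⟨g 0 0, ?_, ?_⟩) hg
  · have hdet := g.det_coe
    rw [det_fin_two, h10, h01, hd] at hdet
    simpa [sq] using hdet
  · ext i j
    fin_cases i <;> fin_cases j <;> simp [h10, h01, hd]

end Matrix.SpecialLinearGroup

/-- For any algebraically closed field `F` of characteristic 2, `SL₂(F)` is an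
ICC group: every non-identity element has an infinite conjugacy class. -/
theorem sl2_char_two_icc
    (F : Type*) [Field F] [IsAlgClosed F] [CharP F 2]
    (g : SpecialLinearGroup (Fin 2) F) (hg : g ≠ 1) :
    (Set.range fun h : SpecialLinearGroup (Fin 2) F => h⁻¹ * g * h).Infinite := by
  refine SpecialLinearGroup.infinite_range_conj_of_notMem_center g ?_
  rwa [SpecialLinearGroup.center_eq_bot_of_charP_two, Subgroup.mem_bot]
end

section
/- If G is an inner amenable group in which the centralizer C(g) is amenable for every non-identity g ∈ G, then G is amenable. -/
/-!
Fix a representative of every conjugacy class of non-identity elements and an invariant mean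
on its centraliser. Transporting that mean along a conjugator gives, for every `x ≠ 1`, a mean
`m x` on `G` with `m (g x g⁻¹) (g A) = m x A`; averaging `x ↦ m x A` against the
conjugation-invariant mean on `G ∖ {1}` yields a left-invariant mean on `G`. The averaging needs
the integral of bounded functions against a finitely additive measure, obtained as the limit of
the integrals of the finite-valued quantisations `⌊(n + 1) f⌋ / (n + 1)`.
-/

/-- A finitely additive probability measure defined on all subsets of `X`. -/
def IsFAPMeasure {X : Type*} (μ : Set X → ℝ) : Prop :=
  μ Set.univ = 1 ∧ (∀ A : Set X, 0 ≤ μ A) ∧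
    ∀ A B : Set X, Disjoint A B → μ (A ∪ B) = μ A + μ B

/-- A group is amenable if its left translation action on itself admits an
invariant finitely additive probability measure. -/
def AmenableGroup (G : Type*) [Group G] : Prop :=
  ∃ μ : Set G → ℝ, IsFAPMeasure μ ∧ ∀ (g : G) (A : Set G), μ ((g * ·) '' A) = μ A

/-- Conjugation by `g` as a map on the non-identity elements of `G`. -/
def conjNonId {G : Type*} [Group G] (g : G) (x : {h : G // h ≠ 1}) : {h : G // h ≠ 1} :=
  ⟨g * x.1 * g⁻¹, fun hx => x.2 (by
    have h1 : x.1 = g⁻¹ * (g * x.1 * g⁻¹) * g := by group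
    rw [h1, hx]; group)⟩

/-- A group is inner amenable if the conjugation action on its set of
non-identity elements admits an invariant finitely additive probability
measure. -/
def InnerAmenable (G : Type*) [Group G] : Prop :=
  ∃ μ : Set {h : G // h ≠ 1} → ℝ, IsFAPMeasure μ ∧
    ∀ (g : G) (A : Set {h : G // h ≠ 1}), μ (conjNonId g '' A) = μ A

open Set Filter Topology Pointwise

namespace IsFAPMeasure

variable {X Y : Type*} {μ : Set X → ℝ}

theorem empty (hμ : IsFAPMeasure μ) : μ ∅ = 0 := by
  have h := hμ.2.2 ∅ ∅ (disjoint_empty _)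
  rw [union_empty] at h
  linarith

theorem mono (hμ : IsFAPMeasure μ) {A B : Set X} (h : A ⊆ B) : μ A ≤ μ B := by
  have h' := hμ.2.2 A (B \ A) disjoint_sdiff_right
  rw [union_sdiff_cancel h] at h'
  linarith [hμ.2.1 (B \ A)]

theorem abs_le_one (hμ : IsFAPMeasure μ) (A : Set X) : |μ A| ≤ 1 := by
  rw [abs_of_nonneg (hμ.2.1 A), ← hμ.1]
  exact hμ.mono (subset_univ A)

theorem comap (hμ : IsFAPMeasure μ) (φ : X → Y) : IsFAPMeasure fun B => μ (φ ⁻¹' B) :=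
  ⟨hμ.1, fun _ => hμ.2.1 _, fun _ _ h => hμ.2.2 _ _ (h.preimage φ)⟩

theorem preimage_finset (hμ : IsFAPMeasure μ) (φ : X → Y) (s : Finset Y) :
    μ (φ ⁻¹' s) = ∑ y ∈ s, μ (φ ⁻¹' {y}) := by
  classical
  induction s using Finset.induction_on with
  | empty => simpa using hμ.empty
  | insert a s ha ih =>
    rw [Finset.coe_insert, insert_eq, preimage_union,
      hμ.2.2 _ _ ((disjoint_singleton_left.2 ha).preimage φ), ih, Finset.sum_insert ha]

theorem sum_preimage_singleton (hμ : IsFAPMeasure μ) {φ : X → Y} {s : Finset Y}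
    (hs : range φ ⊆ s) : ∑ y ∈ s, μ (φ ⁻¹' {y}) = 1 := by
  rw [← hμ.preimage_finset, ← hμ.1]
  exact congrArg μ (eq_univ_of_forall fun x => hs (mem_range_self x))

end IsFAPMeasure

section SimpleIntegral

variable {X Y : Type*} {μ : Set X → ℝ}

-- Meant for `f` of finite range; otherwise `∑ᶠ` may return its junk value `0`.
noncomputable def simpleIntegral (μ : Set X → ℝ) (f : X → ℝ) : ℝ :=
  ∑ᶠ y, y * μ (f ⁻¹' {y})

theorem simpleIntegral_comp_eq_sum (hμ : IsFAPMeasure μ) {φ : X → Y} {s : Finset Y}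
    (hs : range φ ⊆ s) (h : Y → ℝ) :
    simpleIntegral μ (h ∘ φ) = ∑ y ∈ s, h y * μ (φ ⁻¹' {y}) := by
  classical
  have fiber : ∀ z, (h ∘ φ) ⁻¹' {z} = φ ⁻¹' ↑(s.filter (h · = z)) := by
    intro z
    ext x
    simpa using fun _ => hs (mem_range_self x)
  have support : (Function.support fun z => z * μ ((h ∘ φ) ⁻¹' {z})) ⊆ ↑(s.image h) := by
    intro z hz
    by_contra hzs
    refine hz ?_
    dsimp only
    rw [fiber, hμ.preimage_finset, Finset.filter_false_of_mem, Finset.sum_empty, mul_zero]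
    exact fun y hy hyz => hzs (Finset.mem_image.2 ⟨y, hy, hyz⟩)
  rw [simpleIntegral, finsum_eq_sum_of_support_subset _ support,
    ← Finset.sum_fiberwise_of_maps_to fun y hy => Finset.mem_image_of_mem h hy]
  refine Finset.sum_congr rfl fun z _ => ?_
  rw [fiber, hμ.preimage_finset, Finset.mul_sum]
  exact Finset.sum_congr rfl fun y hy => by rw [(Finset.mem_filter.1 hy).2]

theorem simpleIntegral_comp (σ : X → X) (hσ : ∀ B, μ (σ ⁻¹' B) = μ B) (f : X → ℝ) :
    simpleIntegral μ (f ∘ σ) = simpleIntegral μ f := by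
  simp only [simpleIntegral, preimage_comp, hσ]

theorem simpleIntegral_one (hμ : IsFAPMeasure μ) : simpleIntegral μ (fun _ => 1) = 1 := by
  have h := simpleIntegral_comp_eq_sum hμ (φ := fun _ : X => (1 : ℝ)) (s := {1}) (by simp) id
  rwa [Finset.sum_singleton, id, one_mul, preimage_const_of_mem (mem_singleton 1), hμ.1] at h

variable {f g : X → ℝ}

theorem finite_range_map₂ (hf : (range f).Finite) (hg : (range g).Finite) (F : ℝ → ℝ → ℝ) :
    (range fun x => F (f x) (g x)).Finite :=
  (hf.image2 F hg).subset <| range_subset_iff.2 fun x =>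
    mem_image2_of_mem (mem_range_self x) (mem_range_self x)

theorem simpleIntegral_eq_sum (hμ : IsFAPMeasure μ) (hf : (range f).Finite) :
    simpleIntegral μ f = ∑ y ∈ hf.toFinset, y * μ (f ⁻¹' {y}) :=
  simpleIntegral_comp_eq_sum hμ hf.coe_toFinset.ge id

theorem simpleIntegral_map₂ (hμ : IsFAPMeasure μ) (hf : (range f).Finite) (hg : (range g).Finite)
    (F : ℝ → ℝ → ℝ) :
    simpleIntegral μ (fun x => F (f x) (g x)) =
      ∑ p ∈ hf.toFinset ×ˢ hg.toFinset, F p.1 p.2 * μ ((fun x => (f x, g x)) ⁻¹' {p}) :=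
  simpleIntegral_comp_eq_sum hμ (φ := fun x => (f x, g x)) (by rintro _ ⟨x, rfl⟩; simp)
    fun p => F p.1 p.2

theorem simpleIntegral_add (hμ : IsFAPMeasure μ) (hf : (range f).Finite) (hg : (range g).Finite) :
    simpleIntegral μ (f + g) = simpleIntegral μ f + simpleIntegral μ g := by
  have e := simpleIntegral_map₂ hμ hf hg
  rw [show f + g = fun x => f x + g x from rfl, e (· + ·), e fun a _ => a, e fun _ b => b,
    ← Finset.sum_add_distrib]
  simp only [add_mul]

theorem simpleIntegral_sub (hμ : IsFAPMeasure μ) (hf : (range f).Finite) (hg : (range g).Finite) :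
    simpleIntegral μ (f - g) = simpleIntegral μ f - simpleIntegral μ g := by
  have e := simpleIntegral_map₂ hμ hf hg
  rw [show f - g = fun x => f x - g x from rfl, e (· - ·), e fun a _ => a, e fun _ b => b,
    ← Finset.sum_sub_distrib]
  simp only [sub_mul]

theorem simpleIntegral_nonneg (hμ : IsFAPMeasure μ) (hf : (range f).Finite) (h : ∀ x, 0 ≤ f x) :
    0 ≤ simpleIntegral μ f := by
  rw [simpleIntegral_eq_sum hμ hf]
  refine Finset.sum_nonneg fun y hy => mul_nonneg ?_ (hμ.2.1 _)
  obtain ⟨x, rfl⟩ := hf.mem_toFinset.1 hy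
  exact h x

theorem abs_simpleIntegral_le (hμ : IsFAPMeasure μ) (hf : (range f).Finite) {ε : ℝ}
    (h : ∀ x, |f x| ≤ ε) : |simpleIntegral μ f| ≤ ε :=
  calc |simpleIntegral μ f|
      ≤ ∑ y ∈ hf.toFinset, |y| * μ (f ⁻¹' {y}) := by
        rw [simpleIntegral_eq_sum hμ hf]
        refine (Finset.abs_sum_le_sum_abs _ _).trans_eq (Finset.sum_congr rfl fun y _ => ?_)
        rw [abs_mul, abs_of_nonneg (hμ.2.1 _)]
    _ ≤ ∑ y ∈ hf.toFinset, ε * μ (f ⁻¹' {y}) := by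
        refine Finset.sum_le_sum fun y hy => mul_le_mul_of_nonneg_right ?_ (hμ.2.1 _)
        obtain ⟨x, rfl⟩ := hf.mem_toFinset.1 hy
        exact h x
    _ = ε := by rw [← Finset.mul_sum, hμ.sum_preimage_singleton hf.coe_toFinset.ge, mul_one]

theorem abs_simpleIntegral_sub_le (hμ : IsFAPMeasure μ) (hf : (range f).Finite)
    (hg : (range g).Finite) {ε : ℝ} (h : ∀ x, |f x - g x| ≤ ε) :
    |simpleIntegral μ f - simpleIntegral μ g| ≤ ε := by
  rw [← simpleIntegral_sub hμ hf hg]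
  exact abs_simpleIntegral_le hμ (finite_range_map₂ hf hg _) h

end SimpleIntegral

section Integral

variable {X : Type*} {μ : Set X → ℝ} {f g : X → ℝ}

noncomputable def quantize (n : ℕ) (f : X → ℝ) (x : X) : ℝ :=
  ⌊(n + 1) * f x⌋ / (n + 1)

theorem abs_quantize_sub_le (n : ℕ) (f : X → ℝ) (x : X) :
    |quantize n f x - f x| ≤ 1 / (n + 1) := by
  have hn : (0 : ℝ) < n + 1 := by positivity
  have hfloor : |(⌊(n + 1) * f x⌋ : ℝ) - (n + 1) * f x| ≤ 1 :=
    abs_le.2 ⟨by linarith [Int.lt_floor_add_one ((n + 1) * f x)],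
      by linarith [Int.floor_le ((n + 1) * f x)]⟩
  rw [quantize, show (⌊(n + 1) * f x⌋ : ℝ) / (n + 1) - f x
      = ((⌊(n + 1) * f x⌋ : ℝ) - (n + 1) * f x) / (n + 1) by field_simp,
    abs_div, abs_of_pos hn]
  gcongr

theorem finite_range_quantize (hf : ∃ C, ∀ x, |f x| ≤ C) (n : ℕ) :
    (range (quantize n f)).Finite := by
  obtain ⟨C, hC⟩ := hf
  refine ((finite_Icc ⌊-((n + 1) * C)⌋ ⌊(n + 1) * C⌋).image
    fun k : ℤ => (k : ℝ) / (n + 1)).subset ?_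
  rintro _ ⟨x, rfl⟩
  have hn : (0 : ℝ) ≤ n + 1 := by positivity
  obtain ⟨hlo, hhi⟩ := abs_le.1 (hC x)
  exact ⟨_, ⟨Int.floor_mono (by nlinarith), Int.floor_mono (by nlinarith)⟩, rfl⟩

noncomputable def faIntegral (μ : Set X → ℝ) (f : X → ℝ) : ℝ :=
  limUnder atTop fun n => simpleIntegral μ (quantize n f)

theorem tendsto_faIntegral (hμ : IsFAPMeasure μ) (hf : ∃ C, ∀ x, |f x| ≤ C) :
    Tendsto (fun n => simpleIntegral μ (quantize n f)) atTop (𝓝 (faIntegral μ f)) := by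
  refine tendsto_nhds_limUnder (cauchySeq_tendsto_of_complete <|
    cauchySeq_of_le_tendsto_0 (fun N : ℕ => 2 * (1 / (N + 1))) (fun n m N hn hm => ?_) ?_)
  · rw [Real.dist_eq]
    refine abs_simpleIntegral_sub_le hμ (finite_range_quantize hf n) (finite_range_quantize hf m)
      fun x => ?_
    have hnN : 1 / ((n : ℝ) + 1) ≤ 1 / (N + 1) := by gcongr
    have hmN : 1 / ((m : ℝ) + 1) ≤ 1 / (N + 1) := by gcongr
    have hn' := abs_le.1 (abs_quantize_sub_le n f x)
    have hm' := abs_le.1 (abs_quantize_sub_le m f x)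
    exact abs_le.2 ⟨by linarith, by linarith⟩
  · simpa using tendsto_one_div_add_atTop_nhds_zero_nat.const_mul (2 : ℝ)

theorem faIntegral_comp (σ : X → X) (hσ : ∀ B, μ (σ ⁻¹' B) = μ B) (f : X → ℝ) :
    faIntegral μ (f ∘ σ) = faIntegral μ f := by
  simp only [faIntegral]
  congr 1
  funext n
  exact simpleIntegral_comp σ hσ (quantize n f)

theorem faIntegral_one (hμ : IsFAPMeasure μ) : faIntegral μ (fun _ => 1) = 1 := by
  have hq : ∀ n : ℕ, quantize n (fun _ : X => (1 : ℝ)) = fun _ => 1 := fun n => by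
    funext x
    simp [quantize, Nat.cast_add_one_ne_zero]
  have h := tendsto_faIntegral hμ (f := fun _ : X => (1 : ℝ)) ⟨1, by simp⟩
  simp only [hq, simpleIntegral_one hμ] at h
  exact tendsto_nhds_unique h tendsto_const_nhds

theorem faIntegral_nonneg (hμ : IsFAPMeasure μ) (hf : ∃ C, ∀ x, |f x| ≤ C) (h : ∀ x, 0 ≤ f x) :
    0 ≤ faIntegral μ f :=
  ge_of_tendsto' (tendsto_faIntegral hμ hf) fun n =>
    simpleIntegral_nonneg hμ (finite_range_quantize hf n) fun x =>
      div_nonneg (Int.cast_nonneg (Int.floor_nonneg.2 (mul_nonneg (by positivity) (h x))))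
        (by positivity)

theorem faIntegral_add (hμ : IsFAPMeasure μ) (hf : ∃ C, ∀ x, |f x| ≤ C)
    (hg : ∃ C, ∀ x, |g x| ≤ C) : faIntegral μ (f + g) = faIntegral μ f + faIntegral μ g := by
  have hfg : ∃ E, ∀ x, |(f + g) x| ≤ E := by
    obtain ⟨C, hC⟩ := hf
    obtain ⟨D, hD⟩ := hg
    exact ⟨C + D, fun x => (abs_add_le _ _).trans (add_le_add (hC x) (hD x))⟩
  have defect : Tendsto (fun n => simpleIntegral μ (quantize n (f + g))
      - (simpleIntegral μ (quantize n f) + simpleIntegral μ (quantize n g))) atTop (𝓝 0) := by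
    refine squeeze_zero_norm (fun n => ?_)
      (by simpa using tendsto_one_div_add_atTop_nhds_zero_nat.const_mul (3 : ℝ))
    rw [Real.norm_eq_abs, ← simpleIntegral_add hμ (finite_range_quantize hf n)
      (finite_range_quantize hg n)]
    refine abs_simpleIntegral_sub_le hμ (finite_range_quantize hfg n)
      (finite_range_map₂ (finite_range_quantize hf n) (finite_range_quantize hg n) (· + ·))
      fun x => ?_
    have h₁ := abs_le.1 (abs_quantize_sub_le n (f + g) x)
    have h₂ := abs_le.1 (abs_quantize_sub_le n f x)
    have h₃ := abs_le.1 (abs_quantize_sub_le n g x)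
    simp only [Pi.add_apply, one_div] at h₁ h₂ h₃ ⊢
    exact abs_le.2 ⟨by linarith, by linarith⟩
  have := tendsto_nhds_unique ((tendsto_faIntegral hμ hfg).sub
    ((tendsto_faIntegral hμ hf).add (tendsto_faIntegral hμ hg))) defect
  linarith

end Integral

section Bind

variable {X Y : Type*} {μ : Set X → ℝ} {m : X → Set Y → ℝ}

noncomputable def faBind (μ : Set X → ℝ) (m : X → Set Y → ℝ) (A : Set Y) : ℝ :=
  faIntegral μ fun x => m x A

theorem IsFAPMeasure.bind (hμ : IsFAPMeasure μ) (hm : ∀ x, IsFAPMeasure (m x)) :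
    IsFAPMeasure (faBind μ m) := by
  have bdd : ∀ A, ∃ C, ∀ x, |m x A| ≤ C := fun A => ⟨1, fun x => (hm x).abs_le_one A⟩
  refine ⟨?_, fun A => faIntegral_nonneg hμ (bdd A) fun x => (hm x).2.1 A, fun A B hAB => ?_⟩
  · simp only [faBind, fun x => (hm x).1]
    exact faIntegral_one hμ
  · simp only [faBind, fun x => (hm x).2.2 A B hAB]
    exact faIntegral_add hμ (bdd A) (bdd B)

theorem faBind_smul {G : Type*} [Group G] [MulAction G X] [MulAction G Y]
    (hμ : ∀ (g : G) B, μ (g • B) = μ B) (hm : ∀ (g : G) x A, m (g • x) (g • A) = m x A)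
    (g : G) (A : Set Y) : faBind μ m (g • A) = faBind μ m A := by
  have hσ : ∀ B, μ ((g⁻¹ • ·) ⁻¹' B) = μ B := fun B => by rw [preimage_smul, inv_inv, hμ]
  calc faBind μ m (g • A) = faIntegral μ ((fun x => m x A) ∘ (g⁻¹ • ·)) :=
        congrArg (faIntegral μ) (funext fun x => by simpa using hm g (g⁻¹ • x) A)
    _ = faBind μ m A := faIntegral_comp _ hσ _

end Bind

section Amenable

open MulAction

variable {G : Type*} [Group G]

theorem AmenableGroup.exists_subgroup_invariant {H : Subgroup G} (hH : AmenableGroup H) :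
    ∃ ν : Set G → ℝ, IsFAPMeasure ν ∧ ∀ h ∈ H, ∀ A : Set G, ν (h • A) = ν A := by
  obtain ⟨ν, hν, hinv⟩ := hH
  refine ⟨fun A => ν ((↑) ⁻¹' A), hν.comap _, fun h hh A => ?_⟩
  have : ((↑) : H → G) ⁻¹' (h • A) = (⟨h, hh⟩ * ·) '' ((↑) ⁻¹' A) := by
    ext y
    simp [image_mul_left, mem_smul_set_iff_inv_smul_mem]
  simp only [this, hinv]

theorem exists_smul_equivariant_family {X : Type*} [MulAction G X]
    (h : ∀ x : X, ∃ ν : Set G → ℝ, IsFAPMeasure ν ∧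
      ∀ s ∈ stabilizer G x, ∀ A : Set G, ν (s • A) = ν A) :
    ∃ m : X → Set G → ℝ, (∀ x, IsFAPMeasure (m x)) ∧
      ∀ (g : G) x A, m (g • x) (g • A) = m x A := by
  choose ν hν hνinv using h
  let r : X → X := fun x => (Quotient.mk (orbitRel G X) x).out
  have hr : ∀ (g : G) x, r (g • x) = r x := fun g x =>
    congrArg Quotient.out (Quotient.sound ⟨g, rfl⟩)
  have hrx : ∀ x, ∃ t : G, t • r x = x := fun x => by
    obtain ⟨t, ht⟩ := orbitRel_apply.1 (Quotient.mk_out (s := orbitRel G X) x)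
    exact ⟨t⁻¹, inv_smul_eq_iff.2 ht.symm⟩
  choose t ht using hrx
  refine ⟨fun x A => ν (r x) ((t x)⁻¹ • A), fun x => ?_, fun g x A => ?_⟩
  · simpa only [preimage_smul] using (hν (r x)).comap (t x • ·)
  · -- Two transports of the orbit representative differ by an element of its stabiliser.
    have hc : (t (g • x))⁻¹ * g * t x ∈ stabilizer G (r x) := by
      rw [mem_stabilizer_iff, mul_smul, mul_smul, ht, inv_smul_eq_iff, ← hr g, ht]
    dsimp only
    rw [hr, ← hνinv _ _ hc ((t x)⁻¹ • A), smul_smul, smul_smul]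
    congr 2
    group

theorem AmenableGroup.of_invariant_of_amenable_stabilizer {X : Type*} [MulAction G X]
    {μ : Set X → ℝ} (hμ : IsFAPMeasure μ) (hinv : ∀ (g : G) B, μ (g • B) = μ B)
    (hstab : ∀ x : X, AmenableGroup (stabilizer G x)) : AmenableGroup G := by
  obtain ⟨m, hm, hequiv⟩ :=
    exists_smul_equivariant_family fun x => (hstab x).exists_subgroup_invariant
  refine ⟨faBind μ m, hμ.bind hm, fun g A => ?_⟩
  change faBind μ m ((g • ·) '' A) = _
  rw [image_smul]
  exact faBind_smul hinv hequiv g A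

instance conjNonId.instMulAction : MulAction G {h : G // h ≠ 1} where
  smul := conjNonId
  one_smul x := Subtype.ext <| show 1 * x.1 * 1⁻¹ = x.1 by group
  mul_smul g h x := Subtype.ext <| show g * h * x.1 * (g * h)⁻¹ = g * (h * x.1 * h⁻¹) * g⁻¹ by group

theorem stabilizer_conjNonId (x : {h : G // h ≠ 1}) :
    stabilizer G x = Subgroup.centralizer {x.1} := by
  ext g
  rw [mem_stabilizer_iff, Subgroup.mem_centralizer_singleton_iff, ← Subtype.val_inj]
  exact mul_inv_eq_iff_eq_mul

end Amenable

/-- If `G` is inner amenable and the centralizer of every non-identity element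
is amenable, then `G` is amenable. -/
theorem amenable_of_innerAmenable_of_amenable_centralizers
    (G : Type*) [Group G] (hIA : InnerAmenable G)
    (hcent : ∀ g : G, g ≠ 1 → AmenableGroup (Subgroup.centralizer {g})) :
    AmenableGroup G := by
  obtain ⟨μ, hμ, hinv⟩ := hIA
  refine AmenableGroup.of_invariant_of_amenable_stabilizer hμ (fun g B => ?_) fun x => ?_
  · rw [← image_smul]
    exact hinv g B
  · rw [stabilizer_conjNonId]
    exact hcent x.1 x.2
end

section
/- If G is an inner amenable group and H is a subgroup of G that is existentially closed in G, then H is inner amenable. -/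
open FirstOrder

/-- The first-order language of groups: one constant (identity), one unary
function (inverse), one binary function (multiplication), no relations. -/
def grpLang : FirstOrder.Language :=
  ⟨fun n => match n with
    | 0 => Unit
    | 1 => Unit
    | 2 => Unit
    | _ => Empty,
   fun _ => Empty⟩

/-- Every group is a structure for the language of groups in the natural way. -/
instance grpStructure (G : Type*) [Group G] : grpLang.Structure G where
  funMap {n} f v :=
    match n, f with
    | 0, _ => 1
    | 1, _ => (v 0)⁻¹
    | 2, _ => v 0 * v 1
  RelMap {n} r := Empty.elim r

/-- `T` is an `(S, ε)`-conjugation-Følner set: `|gTg⁻¹ △ T| < ε|T|` for all `g ∈ S`. -/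
def IsCFolner {G : Type*} [Group G] (S : Finset G) (ε : ℝ) (T : Finset G) : Prop :=
  letI := Classical.decEq G
  ∀ g ∈ S, (((symmDiff (T.image fun x => g * x * g⁻¹) T).card : ℝ)) < ε * T.card

/-- `G` is inner amenable (Følner formulation): for every finite `S ⊆ G`, every
`ε > 0` and every `n`, there is a nonempty finite `(S, ε)`-conjugation-Følner
set of cardinality at least `n`. -/
def FolnerInnerAmenable (G : Type*) [Group G] : Prop :=
  ∀ (S : Finset G) (ε : ℝ), 0 < ε → ∀ n : ℕ,
    ∃ T : Finset G, T.Nonempty ∧ n ≤ T.card ∧ IsCFolner S ε T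

/-- A subgroup `H ≤ G` is existentially closed in `G` if every existential
first-order statement in the language of groups with parameters from `H`
(i.e. `∃ x̄ φ(x̄, h̄)` with `φ` quantifier-free) that holds in `G` also holds
in `H`. -/
def ExistentiallyClosedIn {G : Type*} [Group G] (H : Subgroup G) : Prop :=
  ∀ (m n : ℕ) (φ : grpLang.BoundedFormula (Fin m) n), φ.IsQF →
    ∀ v : Fin m → H,
      (∃ x : Fin n → G, φ.Realize (fun i => (v i : G)) x) →
      ∃ x : Fin n → H, φ.Realize v x

/-!
Enumerate a finite conjugation-Følner set `T = {t₁, …, t_k}` of `G` for the finite set `S ⊆ H`.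
The quantifier-free formula with parameters from `S` which asserts those of the equations
`s * tᵢ * s⁻¹ = tⱼ` and `tᵢ = tⱼ` that hold and negates the others is satisfied by `t` in `G`,
hence, by existential closedness, by some `x₁, …, x_k` in `H`. The `xᵢ` are then distinct, and
each `s ∈ S` conjugates exactly as many of them out of `X = {x₁, …, x_k}` as it conjugates `tᵢ`
out of `T`, so `X` is a conjugation-Følner set of the same size with the same defects.
-/

open FirstOrder FirstOrder.Language Finset Function

namespace FirstOrder.Language.BoundedFormula

theorem isQF_iInf {L : Language} {α β : Type*} {n : ℕ} [Finite β]
    {f : β → L.BoundedFormula α n} (hf : ∀ b, (f b).IsQF) : (iInf f).IsQF := by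
  let _ := Fintype.ofFinite β
  suffices ∀ l : List (L.BoundedFormula α n), (∀ φ ∈ l, φ.IsQF) → (l.foldr (· ⊓ ·) ⊤).IsQF from
    this _ (by simpa using fun b => hf b)
  intro l hl
  induction l with
  | nil => exact IsQF.top
  | cons φ l ih => exact (hl φ (by simp)).inf (ih fun ψ hψ => hl ψ (by simp [hψ]))

end FirstOrder.Language.BoundedFormula

theorem ExistentiallyClosedIn.exists_forall_realize_iff {G : Type*} [Group G] {H : Subgroup G}
    (hec : ExistentiallyClosedIn H) {m n : ℕ} {ι : Type*} [Finite ι]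
    (φ : ι → grpLang.BoundedFormula (Fin m) n) (hφ : ∀ i, (φ i).IsQF)
    (v : Fin m → H) (t : Fin n → G) :
    ∃ x : Fin n → H, ∀ i, (φ i).Realize v x ↔ (φ i).Realize (fun a => (v a : G)) t := by
  classical
  let diagram : ι → grpLang.BoundedFormula (Fin m) n := fun i =>
    if (φ i).Realize (fun a => (v a : G)) t then φ i else (φ i).not
  have hdiagram : (BoundedFormula.iInf diagram).IsQF :=
    BoundedFormula.isQF_iInf fun i => by
      unfold diagram; split_ifs
      exacts [hφ i, (hφ i).not]
  obtain ⟨x, hx⟩ := hec m n _ hdiagram v ⟨t, by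
    simp only [BoundedFormula.realize_iInf]
    intro i; unfold diagram; split_ifs with h
    exacts [h, h]⟩
  refine ⟨x, fun i => ?_⟩
  have := (BoundedFormula.realize_iInf.1 hx) i
  unfold diagram at this
  split_ifs at this with h <;> simpa [h] using this

def grpConj {α : Type*} (w y : grpLang.Term α) : grpLang.Term α :=
  Term.func (l := 2) () ![Term.func (l := 2) () ![w, y], Term.func (l := 1) () ![w] ]

@[simp] theorem realize_grpConj {G α : Type*} [Group G] (env : α → G) (w y : grpLang.Term α) :
    (grpConj w y).realize env = w.realize env * y.realize env * (w.realize env)⁻¹ := rfl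

def conjEquations (m k : ℕ) :
    (Fin m × Fin k × Fin k) ⊕ (Fin k × Fin k) → grpLang.BoundedFormula (Fin m) k
  | .inl (a, i, j) => (grpConj (Term.var (.inl a)) (Term.var (.inr i))).bdEqual (Term.var (.inr j))
  | .inr (i, j) => (Term.var (.inr i)).bdEqual (Term.var (.inr j))

theorem isQF_conjEquations {m k : ℕ} (e : (Fin m × Fin k × Fin k) ⊕ (Fin k × Fin k)) :
    (conjEquations m k e).IsQF := by
  rcases e with ⟨a, i, j⟩ | ⟨i, j⟩ <;> exact (BoundedFormula.IsAtomic.equal _ _).isQF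

theorem ExistentiallyClosedIn.exists_conj_iff {G : Type*} [Group G] {H : Subgroup G}
    (hec : ExistentiallyClosedIn H) {m k : ℕ} (v : Fin m → H) (t : Fin k → G) :
    ∃ x : Fin k → H, (∀ i j, x i = x j ↔ t i = t j) ∧
      ∀ a i j, v a * x i * (v a)⁻¹ = x j ↔ v a * t i * (v a : G)⁻¹ = t j := by
  obtain ⟨x, hx⟩ := hec.exists_forall_realize_iff _ isQF_conjEquations v t
  exact ⟨x, fun i j => by simpa [conjEquations] using hx (.inr (i, j)),
    fun a i j => by simpa [conjEquations] using hx (.inl (a, i, j))⟩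

theorem Finset.card_symmDiff_image_conj {G ι : Type*} [Group G] [DecidableEq G] [Fintype ι]
    {t : ι → G} (ht : Injective t) (g : G) :
    #(symmDiff ((univ.image t).image fun y => g * y * g⁻¹) (univ.image t)) =
      2 * #{i | ∀ j, g * t i * g⁻¹ ≠ t j} := by
  set T := univ.image t
  set A := T.image fun y => g * y * g⁻¹
  have hconj : Injective fun y : G => g * y * g⁻¹ := (MulAut.conj g).injective
  have hA : #A = #T := card_image_of_injective _ hconj
  have hAT : A \ T = image (fun i => g * t i * g⁻¹) {i | ∀ j, g * t i * g⁻¹ ≠ t j} := by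
    simp only [A, T, image_image, sdiff_eq_filter, filter_image]
    congr 1
    ext i
    simp [eq_comm]
  rw [symmDiff_def, sup_eq_union, card_union_of_disjoint disjoint_sdiff_sdiff,
    ← card_sdiff_comm hA, hAT,
    card_image_of_injective (f := fun i => g * t i * g⁻¹) _ (hconj.comp ht), two_mul]

theorem Finset.card_symmDiff_image_conj_eq {G G' ι : Type*} [Group G] [Group G'] [DecidableEq G]
    [DecidableEq G'] [Fintype ι] {t : ι → G} {x : ι → G'} (ht : Injective t) (hx : Injective x)
    {g : G} {g' : G'} (h : ∀ i j, g * t i * g⁻¹ = t j ↔ g' * x i * g'⁻¹ = x j) :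
    #(symmDiff ((univ.image t).image fun y => g * y * g⁻¹) (univ.image t)) =
      #(symmDiff ((univ.image x).image fun y => g' * y * g'⁻¹) (univ.image x)) := by
  simp only [card_symmDiff_image_conj ht, card_symmDiff_image_conj hx, ne_eq, h]

theorem Finset.exists_injective_fin_image_eq {α : Type*} [DecidableEq α] (T : Finset α) :
    ∃ (k : ℕ) (t : Fin k → α), Injective t ∧ univ.image t = T :=
  ⟨#T, (↑) ∘ T.equivFin.symm, Subtype.val_injective.comp T.equivFin.symm.injective, by
    ext y
    simpa using
      ⟨fun ⟨a, ha⟩ => ha ▸ (T.equivFin.symm a).2, fun hy => ⟨T.equivFin ⟨y, hy⟩, by simp⟩⟩⟩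

/-- If `G` is inner amenable and `H` is a subgroup of `G` that is existentially
closed in `G`, then `H` is inner amenable. -/
theorem innerAmenable_of_existentiallyClosed
    (G : Type*) [Group G] (H : Subgroup G)
    (hG : FolnerInnerAmenable G) (hec : ExistentiallyClosedIn H) :
    FolnerInnerAmenable H := by
  let _ := Classical.decEq G
  let _ := Classical.decEq H
  intro S ε hε n
  obtain ⟨T, -, hnT, hT⟩ := hG (S.image (↑)) ε hε (max n 1)
  obtain ⟨k, t, ht, rfl⟩ := T.exists_injective_fin_image_eq
  let v : Fin #S → H := (↑) ∘ S.equivFin.symm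
  obtain ⟨x, hxt, hconj⟩ := hec.exists_conj_iff v t
  have hx : Injective x := fun i j h => ht ((hxt i j).1 h)
  have hcard : #(univ.image x) = #(univ.image t) := by
    rw [card_image_of_injective _ hx, card_image_of_injective _ ht]
  refine ⟨univ.image x, card_pos.1 (by omega), by omega, fun g hg => ?_⟩
  obtain ⟨a, rfl⟩ : ∃ a, v a = g := ⟨S.equivFin ⟨g, hg⟩, by simp [v]⟩
  rw [hcard, ← card_symmDiff_image_conj_eq ht hx fun i j => (hconj a i j).symm]
  exact hT _ (mem_image_of_mem _ hg)
end
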